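/- Let ζ₀ be a zero of ω_m with ζ₀ ∉ {z_{ν+1},…,z_λ}, D(ζ₀) ≠ 0, and |ζ₀| > |z_{ν+1}|. Then along n ∈ Λ_m, |r(ζ₀) − π_{n,λ−1}(ζ₀)| = |ζ₀^{n+λ}/(D(ζ₀)V_{n+λ}(ζ₀))| → ∞ as n → ∞; in particular π_{n,λ−1}(ζ₀) → ∞. -/

import Mathlib

/-!
Along the progression `k ≡ m (mod σ)` the dominant poles satisfy `z_j^k = (z₁^σ)^⌊k/σ⌋ z_j^m`, so
the dominant part of `V_k(ζ₀)` is a multiple of `ω_m(ζ₀) = 0`. What is left is a sum over the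
remaining poles, in which the term of `z_{ν+1}` strictly dominates, so
`V_k(ζ₀) ~ C_{ν+1} D_{ν+1}(ζ₀) z_{ν+1}^k`, and the error `ζ₀^k / (D(ζ₀) V_k(ζ₀))` grows like
`(|ζ₀| / |z_{ν+1}|)^k`.
-/

open Polynomial Finset Filter Topology

theorem Finset.prod_erase_eq_prod_erase_mul_prod_sdiff {ι M : Type*} [CommMonoid M]
    [DecidableEq ι] {s t : Finset ι} (hst : s ⊆ t) {j : ι}
    (hj : j ∈ s) (f : ι → M) :
    ∏ i ∈ t.erase j, f i = (∏ i ∈ s.erase j, f i) * ∏ i ∈ t \ s, f i := by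
  have hsdiff : t.erase j \ s.erase j = t \ s := by
    ext i; by_cases i = j <;> simp_all
  rw [← prod_sdiff (erase_subset_erase j hst), hsdiff, mul_comm]

theorem pow_eq_pow_div_mul_pow_mod {M : Type*} [Monoid M] {x w : M} {p : ℕ} (hx : x ^ p = w)
    (k : ℕ) : x ^ k = w ^ (k / p) * x ^ (k % p) := by
  conv_lhs => rw [← Nat.div_add_mod k p]
  rw [pow_add, pow_mul, hx]

theorem sum_mul_pow_mul_prod_erase_eq_sum_compl {ι R : Type*} [Fintype ι] [DecidableEq ι]
    [CommRing R] {s : Finset ι} {c z : ι → R} {x w : R} {p m k : ℕ}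
    (hroot : ∀ j ∈ s, z j ^ p = w) (hk : k % p = m)
    (hx : ∑ j ∈ s, c j * z j ^ m * ∏ i ∈ s.erase j, (x - z i) = 0) :
    ∑ j, c j * z j ^ k * ∏ i ∈ univ.erase j, (x - z i) =
      ∑ j ∈ sᶜ, c j * z j ^ k * ∏ i ∈ univ.erase j, (x - z i) := by
  have hterm : ∀ j ∈ s, c j * z j ^ k * ∏ i ∈ univ.erase j, (x - z i) =
      (w ^ (k / p) * ∏ i ∈ univ \ s, (x - z i)) *
        (c j * z j ^ m * ∏ i ∈ s.erase j, (x - z i)) := by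
    intro j hj
    rw [pow_eq_pow_div_mul_pow_mod (hroot j hj) k, hk,
      prod_erase_eq_prod_erase_mul_prod_sdiff (subset_univ s) hj]
    ring
  rw [← sum_add_sum_compl s, sum_congr rfl hterm, ← mul_sum, hx, mul_zero, zero_add]

theorem tendsto_sum_mul_pow_div_pow_dominant {ι 𝕜 : Type*} [NormedField 𝕜] {s : Finset ι}
    {a w : ι → 𝕜} {i₀ : ι} (hi₀ : i₀ ∈ s) (hw : w i₀ ≠ 0)
    (hdom : ∀ j ∈ s, j ≠ i₀ → ‖w j‖ < ‖w i₀‖) :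
    Tendsto (fun k : ℕ => (∑ j ∈ s, a j * w j ^ k) / w i₀ ^ k) atTop (𝓝 (a i₀)) := by
  classical
  have hterm : ∀ j ∈ s, Tendsto (fun k : ℕ => a j * (w j / w i₀) ^ k) atTop
      (𝓝 (if j = i₀ then a j else 0)) := by
    intro j hj
    split_ifs with h
    · subst h; simp [div_self hw]
    · have hlt : ‖w j / w i₀‖ < 1 := by
        rw [norm_div, div_lt_one (norm_pos_iff.mpr hw)]; exact hdom j hj h
      simpa using (tendsto_pow_atTop_nhds_zero_of_norm_lt_one hlt).const_mul (a j)
  have hsum := tendsto_finsetSum s hterm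
  rw [sum_ite_eq' s i₀ a, if_pos hi₀] at hsum
  refine hsum.congr fun k => ?_
  simp only [sum_div, div_pow, mul_div_assoc]

theorem tendsto_norm_div_atTop {α 𝕜 : Type*} [NormedField 𝕜] {l : Filter α} {a b : α → 𝕜}
    {L : 𝕜} (ha : Tendsto (fun x => ‖a x‖) l atTop) (hb : Tendsto b l (𝓝 L)) (hL : L ≠ 0) :
    Tendsto (fun x => ‖a x / b x‖) l atTop := by
  simp_rw [norm_div, div_eq_mul_inv]
  exact ha.atTop_mul_pos (inv_pos.mpr (norm_pos_iff.mpr hL))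
    (hb.norm.inv₀ (norm_ne_zero_iff.mpr hL))

theorem stmt8 (lam nu sig mm : ℕ) (hnul : nu + 1 < lam)
    (hmm : mm < sig)
    (z Cc : Fin lam → ℂ)
    (hC : ∀ j, Cc j ≠ 0)
    (hroot : ∀ j : Fin lam, (j : ℕ) < nu → z j ^ sig = z ⟨0, by omega⟩ ^ sig)
    (hdrop1 : ∀ j : Fin lam, nu + 1 ≤ (j : ℕ) →
      ‖z j‖ < ‖z ⟨nu, by omega⟩‖)
    (ζ₀ : ℂ)
    (habs : ‖ζ₀‖ > ‖z ⟨nu, by omega⟩‖) :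
    let D : Polynomial ℂ := ∏ i, (Polynomial.X - Polynomial.C (z i))
    let Dj : Fin lam → Polynomial ℂ :=
      fun j => ∏ i ∈ Finset.univ.erase j, (Polynomial.X - Polynomial.C (z i))
    let V : ℕ → Polynomial ℂ := fun k => ∑ j, Polynomial.C (Cc j * z j ^ k) * Dj j
    let dom : Finset (Fin lam) := Finset.univ.filter (fun j => (j : ℕ) < nu)
    let ω : Polynomial ℂ := ∑ k ∈ dom, Polynomial.C (Cc k * z k ^ mm) *
      ∏ i ∈ dom.erase k, (Polynomial.X - Polynomial.C (z i))
    let Λ : Filter ℕ := atTop ⊓ Filter.principal {n | (n + lam) % sig = mm % sig}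
    ω.eval ζ₀ = 0 → D.eval ζ₀ ≠ 0 →
    (Tendsto (fun n : ℕ => ‖ζ₀ ^ (n + lam) / (D.eval ζ₀ * (V (n + lam)).eval ζ₀)‖) Λ atTop) := by
  intro D Dj V dom ω Λ hω hD
  -- indices start at 0, so this is the pole `z_{ν+1}` of the paper
  set ν : Fin lam := ⟨nu, by omega⟩
  set E : Fin lam → ℂ := fun j => ∏ i ∈ univ.erase j, (ζ₀ - z i)
  have hEν : E ν ≠ 0 := by
    have hDE : D.eval ζ₀ = (ζ₀ - z ν) * E ν := by
      simpa [D, E, eval_prod] using (mul_prod_erase univ (fun i => ζ₀ - z i) (mem_univ ν)).symm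
    exact right_ne_zero_of_mul (hDE ▸ hD)
  have hzν : z ν ≠ 0 :=
    norm_pos_iff.mp ((norm_nonneg _).trans_lt (hdrop1 ⟨nu + 1, hnul⟩ le_rfl))
  have hV : ∀ n ∈ {n | (n + lam) % sig = mm % sig},
      (V (n + lam)).eval ζ₀ = ∑ j ∈ domᶜ, Cc j * E j * z j ^ (n + lam) := by
    intro n hn
    simp only [V, Dj, eval_finsetSum, eval_mul, eval_C, eval_prod, eval_sub, eval_X]
    rw [sum_mul_pow_mul_prod_erase_eq_sum_compl (fun j hj => hroot j (mem_filter.mp hj).2)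
      (hn.trans (Nat.mod_eq_of_lt hmm)) (by simpa [ω, eval_finsetSum, eval_prod] using hω)]
    exact sum_congr rfl fun j _ => by ring
  have hasymp : Tendsto (fun n => D.eval ζ₀ *
      ((∑ j ∈ domᶜ, Cc j * E j * z j ^ (n + lam)) / z ν ^ (n + lam))) atTop
      (𝓝 (D.eval ζ₀ * (Cc ν * E ν))) := by
    refine ((tendsto_sum_mul_pow_div_pow_dominant (by simp [dom, ν]) hzν ?_).comp
      (tendsto_add_atTop_nat lam)).const_mul _
    intro j hj hjν
    simp only [dom, ν, mem_compl, mem_filter, mem_univ, true_and, not_lt, ne_eq,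
      Fin.ext_iff] at hj hjν
    exact hdrop1 j (by omega)
  have hgrowth : Tendsto (fun n => ‖(ζ₀ / z ν) ^ (n + lam)‖) atTop atTop := by
    simp_rw [norm_pow, norm_div]
    exact (tendsto_pow_atTop_atTop_of_one_lt ((one_lt_div (norm_pos_iff.mpr hzν)).mpr habs)).comp
      (tendsto_add_atTop_nat lam)
  refine (tendsto_norm_div_atTop (hgrowth.mono_left inf_le_left) (hasymp.mono_left inf_le_left)
    (mul_ne_zero hD (mul_ne_zero (hC ν) hEν))).congr' ?_
  filter_upwards [mem_inf_of_right (mem_principal_self _)] with n hn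
  rw [hV n hn, div_pow, ← mul_div_assoc, div_div_div_cancel_right₀ (pow_ne_zero _ hzν)]
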